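/- For every instance of the simplified rule (□_R) of LNS_Kt*, i.e., with conclusion G ⇗ Γ ⇒ Δ,□A and premiss G ⇗ Γ ⇒ Δ,□A ↗ ε ⇒ A (where G is a possibly empty context, ⇗ stands for either ↗ or ↙, and ε is the empty multiset): if the conclusion is falsifiable, then the premiss is falsifiable; and likewise for the rule (■_R) with conclusion G ⇗ Γ ⇒ Δ,■A and premiss G ⇗ Γ ⇒ Δ,■A ↙ ε ⇒ A. -/

import Mathlib

/-- Formulae of tense logic: atoms (indexed by naturals), ⊥, →, □, ◇, ■, ◆. -/
inductive Formula : Type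
  | atom : ℕ → Formula
  | bot : Formula
  | imp : Formula → Formula → Formula
  | box : Formula → Formula
  | dia : Formula → Formula
  | bbox : Formula → Formula
  | bdia : Formula → Formula

def Formula.neg (A : Formula) : Formula := A.imp .bot
def Formula.and (A B : Formula) : Formula := (A.imp B.neg).neg
def Formula.or (A B : Formula) : Formula := A.neg.imp B
def Formula.top : Formula := Formula.bot.imp .bot

/-- Formulas built from atoms, ⊥, →, □, ■ only (no diamonds). -/
def Formula.NoDia : Formula → Prop
  | .atom _ => True
  | .bot => True
  | .imp A B => A.NoDia ∧ B.NoDia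
  | .box A => A.NoDia
  | .dia _ => False
  | .bbox A => A.NoDia
  | .bdia _ => False

/-- Structural connectives: `up` is ↗ and `dn` is ↙. -/
inductive Dir : Type
  | up
  | dn

/-- Linear nested sequents: a nonempty list of components `Γ ⇒ Δ`
joined by the structural connectives ↗ (`up`) and ↙ (`dn`). -/
inductive LNS : Type
  | single (Γ Δ : Multiset Formula) : LNS
  | up (Γ Δ : Multiset Formula) (S : LNS) : LNS
  | dn (Γ Δ : Multiset Formula) (S : LNS) : LNS

/-- A (possibly empty) context: a list of components, each together with the
structural connective joining it to what follows. -/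
abbrev Ctx := List (Multiset Formula × Multiset Formula × Dir)

/-- `plug G S` is the linear nested sequent `G ⇗ S` (just `S` when `G` is empty). -/
def plug : Ctx → LNS → LNS
  | [], S => S
  | (Γ, Δ, Dir.up) :: G, S => LNS.up Γ Δ (plug G S)
  | (Γ, Δ, Dir.dn) :: G, S => LNS.dn Γ Δ (plug G S)

/-- The structural connective joining the context to what follows it (none if empty). -/
def lastDir : Ctx → Option Dir
  | [] => none
  | [(_, _, d)] => some d
  | _ :: G => lastDir G

/-- Kripke forcing for tense logic. -/
def Force {W : Type} (R : W → W → Prop) (V : W → ℕ → Prop) : W → Formula → Prop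
  | w, .atom p => V w p
  | _, .bot => False
  | w, .imp A B => Force R V w A → Force R V w B
  | w, .box A => ∀ v, R w v → Force R V v A
  | w, .dia A => ∃ v, R w v ∧ Force R V v A
  | w, .bbox A => ∀ v, R v w → Force R V v A
  | w, .bdia A => ∃ v, R v w ∧ Force R V v A

/-- Conjunction of a finite multiset of formulae (empty conjunction is ⊤). -/
noncomputable def bigAnd (Γ : Multiset Formula) : Formula :=
  Γ.toList.foldr Formula.and Formula.top

/-- Disjunction of a finite multiset of formulae (empty disjunction is ⊥). -/
noncomputable def bigOr (Δ : Multiset Formula) : Formula :=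
  Δ.toList.foldr Formula.or Formula.bot

/-- The formula translation τ of a linear nested sequent. -/
noncomputable def tau : LNS → Formula
  | .single Γ Δ => (bigAnd Γ).imp (bigOr Δ)
  | .up Γ Δ S => (bigAnd Γ).imp ((bigOr Δ).or (tau S).box)
  | .dn Γ Δ S => (bigAnd Γ).imp ((bigOr Δ).or (tau S).bbox)

/-- A formula is valid if it is forced at every world of every Kripke model. -/
def Valid (A : Formula) : Prop :=
  ∀ (W : Type) (_ : Nonempty W) (R : W → W → Prop) (V : W → ℕ → Prop) (w : W),
    Force R V w A

/-- A linear nested sequent is falsifiable if its formula translation fails at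
some world of some Kripke model. -/
def Falsifiable (S : LNS) : Prop :=
  ∃ (W : Type) (_ : Nonempty W) (R : W → W → Prop) (V : W → ℕ → Prop) (w : W),
    ¬ Force R V w (tau S)

/-! Nesting `Γ ⇒ Δ ↗ ε ⇒ A` means `Γ ⇒ □A, Δ` in every model, so the premiss of (□_R) is the
conclusion with `□A` duplicated in the succedent, and contraction makes the two equivalent.
The formula translation is positive in the nested sequent it wraps, so this equivalence of
the innermost components lifts through any context `G`, and a countermodel of the conclusion
is one of the premiss. The same holds for ↙ and ■. -/

theorem Multiset.exists_mem_cons_iff {α : Type*} {p : α → Prop} {a : α} {s : Multiset α} :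
    (∃ b ∈ a ::ₘ s, p b) ↔ p a ∨ ∃ b ∈ s, p b := by
  simp only [Multiset.mem_cons, or_and_right, exists_or, exists_eq_left]

section Forcing

variable {W : Type} {R : W → W → Prop} {V : W → ℕ → Prop} {w : W}

lemma force_or {A B : Formula} : Force R V w (A.or B) ↔ Force R V w A ∨ Force R V w B := by
  simp only [Formula.or, Formula.neg, Force]
  tauto

lemma force_bigOr {Δ : Multiset Formula} : Force R V w (bigOr Δ) ↔ ∃ B ∈ Δ, Force R V w B := by
  suffices ∀ l : List Formula, Force R V w (l.foldr Formula.or .bot) ↔ ∃ B ∈ l, Force R V w B by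
    simpa only [bigOr, Multiset.mem_toList] using this Δ.toList
  intro l
  induction l with
  | nil => simp [Force]
  | cons B l ih => simp [force_or, ih]

lemma force_bigAnd_zero : Force R V w (bigAnd 0) := by
  simp [bigAnd, Formula.top, Force]

lemma force_tau_single {Γ Δ : Multiset Formula} :
    Force R V w (tau (.single Γ Δ)) ↔ (Force R V w (bigAnd Γ) → ∃ B ∈ Δ, Force R V w B) := by
  rw [tau, Force, force_bigOr]

lemma force_tau_single_zero_singleton {A : Formula} :
    Force R V w (tau (.single 0 {A})) ↔ Force R V w A := by
  simp [force_tau_single, force_bigAnd_zero]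

lemma force_tau_single_cons_cons {Γ Δ : Multiset Formula} {A : Formula} :
    Force R V w (tau (.single Γ (A ::ₘ A ::ₘ Δ))) ↔ Force R V w (tau (.single Γ (A ::ₘ Δ))) := by
  simp only [force_tau_single, Multiset.exists_mem_cons_iff, or_self_left]

lemma force_tau_up_single_zero_singleton {Γ Δ : Multiset Formula} {A : Formula} :
    Force R V w (tau (.up Γ Δ (.single 0 {A}))) ↔
      Force R V w (tau (.single Γ (A.box ::ₘ Δ))) := by
  rw [force_tau_single, tau, Force, force_or, force_bigOr]
  simp only [Force, force_tau_single_zero_singleton, Multiset.exists_mem_cons_iff,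
    or_comm]

lemma force_tau_dn_single_zero_singleton {Γ Δ : Multiset Formula} {A : Formula} :
    Force R V w (tau (.dn Γ Δ (.single 0 {A}))) ↔
      Force R V w (tau (.single Γ (A.bbox ::ₘ Δ))) := by
  rw [force_tau_single, tau, Force, force_or, force_bigOr]
  simp only [Force, force_tau_single_zero_singleton, Multiset.exists_mem_cons_iff,
    or_comm]

end Forcing

lemma force_tau_plug_of_imp {W : Type} {R : W → W → Prop} {V : W → ℕ → Prop} {S S' : LNS}
    (h : ∀ w, Force R V w (tau S') → Force R V w (tau S)) (G : Ctx) :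
    ∀ w, Force R V w (tau (plug G S')) → Force R V w (tau (plug G S)) := by
  induction G with
  | nil => exact h
  | cons c G ih =>
    obtain ⟨Γ, Δ, _ | _⟩ := c <;>
    · intro w hw hΓ hΔ v hv
      exact ih v (hw hΓ hΔ v hv)

lemma Falsifiable.plug_of_imp {S S' : LNS}
    (h : ∀ (W : Type) (R : W → W → Prop) (V : W → ℕ → Prop) (w : W),
      Force R V w (tau S') → Force R V w (tau S)) (G : Ctx) :
    Falsifiable (plug G S) → Falsifiable (plug G S') := by
  rintro ⟨W, hW, R, V, w, hw⟩
  exact ⟨W, hW, R, V, w, mt (force_tau_plug_of_imp (h W R V) G w) hw⟩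

/-- Soundness of the simplified rules (□_R) and (■_R) of LNS_Kt*: if the
conclusion `G ⇗ Γ ⇒ Δ,□A` (resp. `G ⇗ Γ ⇒ Δ,■A`) is falsifiable, then so is
the premiss `G ⇗ Γ ⇒ Δ,□A ↗ ε ⇒ A` (resp. `G ⇗ Γ ⇒ Δ,■A ↙ ε ⇒ A`). -/
theorem boxR_bboxR_sound :
    (∀ (G : Ctx) (Γ Δ : Multiset Formula) (A : Formula),
      Falsifiable (plug G (.single Γ (A.box ::ₘ Δ))) →
        Falsifiable (plug G (.up Γ (A.box ::ₘ Δ) (.single 0 {A})))) ∧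
    (∀ (G : Ctx) (Γ Δ : Multiset Formula) (A : Formula),
      Falsifiable (plug G (.single Γ (A.bbox ::ₘ Δ))) →
        Falsifiable (plug G (.dn Γ (A.bbox ::ₘ Δ) (.single 0 {A})))) :=
  ⟨fun G _ _ _ => Falsifiable.plug_of_imp
      (fun _ _ _ _ h => force_tau_single_cons_cons.mp (force_tau_up_single_zero_singleton.mp h)) G,
    fun G _ _ _ => Falsifiable.plug_of_imp
      (fun _ _ _ _ h => force_tau_single_cons_cons.mp (force_tau_dn_single_zero_singleton.mp h)) G⟩
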